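/- Lumpable bisimilarity on high contexts ≈_l^hc is an equivalence relation over PEPA components (reflexive, symmetric, and transitive). -/
import Mathlib


open scoped ENNReal Classical

/-- Action types: a countable set with a distinguished silent type `tau`. -/
inductive Act : Type where
  | tau : Act
  | vis : ℕ → Act
deriving DecidableEq

/-- PEPA components: prefix `(α,r).P`, choice `P+Q`, cooperation `P ⊲⊳_L Q`,
hiding `P/L`, and constants `A` (given by an environment of defining equations).
Rates live in `ℝ≥0∞` (positive reals together with the unspecified symbol `⊤`). -/
inductive Proc : Type where
  | pre : Act → ℝ≥0∞ → Proc → Proc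
  | choice : Proc → Proc → Proc
  | coop : Proc → Set Act → Proc → Proc
  | hide : Proc → Set Act → Proc
  | const : ℕ → Proc

namespace PEPA

/-- Fuelled conditional transition rate `qF E n P α P'`: the total rate
(with multiplicities) of the `α`-transitions from `P` to `P'` in the
multi-transition system given by the operational semantics of Table 1,
computed with `n` units of fuel for unfolding constants.
The shared-activity (cooperation) rule uses the apparent rates
`r_α(P) = ∑' X, qF E n P α X` as in
`R = (r₁/r_α(P)) · (r₂/r_α(Q)) · min(r_α(P), r_α(Q))`. -/
noncomputable def qF (E : ℕ → Proc) : ℕ → Proc → Act → Proc → ℝ≥0∞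
  | 0, _, _, _ => 0
  | n+1, .pre β r P, α, X => if β = α ∧ X = P then r else 0
  | n+1, .choice P Q, α, X => qF E n P α X + qF E n Q α X
  | n+1, .hide P L, α, X =>
      match X with
      | .hide P' L' =>
          if L' = L then
            if α = .tau then qF E n P .tau P' + ∑' β : L, qF E n P β P'
            else if α ∈ L then 0 else qF E n P α P'
          else 0
      | _ => 0
  | n+1, .coop P L Q, α, X =>
      match X with
      | .coop P' L' Q' =>
          if L' = L then
            if α ∈ L then
              (qF E n P α P' / ∑' Y, qF E n P α Y) * (qF E n Q α Q' / ∑' Y, qF E n Q α Y)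
                * min (∑' Y, qF E n P α Y) (∑' Y, qF E n Q α Y)
            else
              (if Q' = Q then qF E n P α P' else 0) + (if P' = P then qF E n Q α Q' else 0)
          else 0
      | _ => 0
  | n+1, .const c, α, X => qF E n (E c) α X

/-- `q E P α P'` : the (total) conditional transition rate from `P` to `P'`
via action type `α`, i.e. the sum of the rates over all transitions
`P --(α,r)--> P'` of the multi-transition system. -/
noncomputable def q (E : ℕ → Proc) (P : Proc) (α : Act) (P' : Proc) : ℝ≥0∞ :=
  ⨆ n, qF E n P α P'

/-- Total conditional transition rate `q[P,S,α] = Σ_{P'∈S} q(P,P',α)`. -/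
noncomputable def qTo (E : ℕ → Proc) (P : Proc) (S : Set Proc) (α : Act) : ℝ≥0∞ :=
  ∑' P' : S, q E P α P'

/-- One step of the derivation graph: `P` has some transition to `P'`. -/
def Step (E : ℕ → Proc) (P P' : Proc) : Prop := ∃ α, q E P α P' ≠ 0

/-- The derivative set `ds(P)`: the set of states reachable from `P`. -/
def ds (E : ℕ → Proc) (P : Proc) : Set Proc :=
  {P' | Relation.ReflTransGen (Step E) P P'}

/-- `𝒜(P)`: the set of current action types of `P`. -/
def curTypes (E : ℕ → Proc) (P : Proc) : Set Act :=
  {α | ∃ P', q E P α P' ≠ 0}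

/-- The set of equivalence classes `𝒞/ℛ` of a relation `ℛ`. -/
def eqCls (R : Proc → Proc → Prop) : Set (Set Proc) :=
  {S | ∃ P, S = {Q | R P Q}}

/-- A lumpable bisimulation: an equivalence relation `R` such that whenever
`R P Q`, then for all `α` and all classes `S` of `R` with either `α ≠ τ`, or
`α = τ` and `P,Q ∉ S`, it holds that `q[P,S,α] = q[Q,S,α]`. -/
def IsLumpBisim (E : ℕ → Proc) (R : Proc → Proc → Prop) : Prop :=
  Equivalence R ∧
    ∀ P Q, R P Q → ∀ α, ∀ S ∈ eqCls R,
      (α ≠ Act.tau ∨ (P ∉ S ∧ Q ∉ S)) → qTo E P S α = qTo E Q S α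

/-- Lumpable bisimilarity `≈_l`: the union of all lumpable bisimulations. -/
def lb (E : ℕ → Proc) (P Q : Proc) : Prop :=
  ∃ R, IsLumpBisim E R ∧ R P Q

section High

-- `Hs` is the set `ℋ` of high action types (the remaining visible types are low).
variable (E : ℕ → Proc) (Hs : Set Act)

/-- A high level component: every derivative may next engage in high types only. -/
def IsHighComp (Hc : Proc) : Prop := ∀ H' ∈ ds E Hc, curTypes E H' ⊆ Hs

/-- The set `ℒ` of low action types. -/
def Low : Set Act := {α | α ∉ Hs ∧ α ≠ Act.tau}

/-- An inert component: a high level component performing no activity at all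
(hence sharing no action type with any component). -/
def inert : Proc := .pre .tau 0 (.const 0)

/-- `P \ ℋ` : `P ⊲⊳_ℋ H̄` where `H̄` is a high level component that does not
cooperate with `P` (it shares no action types with the derivatives of `P`). -/
def restr (P : Proc) : Proc := .coop P Hs inert

/-- The high context `C[_] = (_ ⊲⊳_ℋ Hc)/ℋ` applied to `P`. -/
def hctx (Hc P : Proc) : Proc := .hide (.coop P Hs Hc) Hs

/-- Stochastic Non-Interference: `P\ℋ ≈_l (P ⊲⊳_ℋ H)/ℋ` for every high `H`. -/
def SNI (P : Proc) : Prop :=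
  ∀ Hc, IsHighComp E Hs Hc → lb E (restr Hs P) (hctx Hs Hc P)

/-- Persistent Stochastic Non-Interference: every derivative of `P` satisfies SNI. -/
def PSNI (P : Proc) : Prop := ∀ P' ∈ ds E P, SNI E Hs P'

/-- `q_C(P,P',α)`: the sum of the rates over all transitions
`C[P] --(α,r)--> C'[P']` (with `C'[_]` ranging over high contexts). -/
noncomputable def qC (Hc P : Proc) (α : Act) (P' : Proc) : ℝ≥0∞ :=
  ∑' Hc' : Proc, q E (hctx Hs Hc P) α (hctx Hs Hc' P')

/-- `q_C[P,S,α] = Σ_{P'∈S} q_C(P,P',α)`. -/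
noncomputable def qCTo (Hc P : Proc) (S : Set Proc) (α : Act) : ℝ≥0∞ :=
  ∑' P' : S, qC E Hs Hc P α P'

/-- A lumpable bisimulation on high contexts. -/
def IsLumpBisimHC (R : Proc → Proc → Prop) : Prop :=
  Equivalence R ∧
    ∀ P Q, R P Q → ∀ Hc, IsHighComp E Hs Hc → ∀ α, ∀ S ∈ eqCls R,
      (α ≠ Act.tau ∨ (P ∉ S ∧ Q ∉ S)) →
        qCTo E Hs Hc P S α = qCTo E Hs Hc Q S α

/-- Lumpable bisimilarity on high contexts `≈_l^hc`. -/
def lbhc (P Q : Proc) : Prop := ∃ R, IsLumpBisimHC E Hs R ∧ R P Q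

/-- A lumpable bisimulation up to `ℋ`. -/
def IsLumpBisimUpto (R : Proc → Proc → Prop) : Prop :=
  Equivalence R ∧
    ∀ P Q, R P Q → ∀ α, ∀ S ∈ eqCls R,
      ((α ∉ Hs ∧ α ≠ Act.tau) → qTo E P S α = qTo E Q S α) ∧
      ((α ∈ Hs ∨ α = Act.tau) → P ∉ S → Q ∉ S → qTo E P S α = qTo E Q S α)

/-- Lumpable bisimilarity up to `ℋ`, written `≈_l^ℋ`. -/
def lbUpto (P Q : Proc) : Prop := ∃ R, IsLumpBisimUpto E Hs R ∧ R P Q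

end High

end PEPA

open PEPA

private lemma tsum_saturated {R : Proc → Proc → Prop} (hR : Equivalence R)
    {S : Set Proc} (hsat : ∀ x ∈ S, ∀ y, R x y → y ∈ S)
    (f g : Proc → ℝ≥0∞)
    (h : ∀ x ∈ S, ∑' y : {y | R x y}, f y = ∑' y : {y | R x y}, g y) :
    ∑' x : S, f x = ∑' x : S, g x := by
  let s : Setoid S := ⟨fun a b => R a b,
    ⟨fun a => hR.refl _, fun h => hR.symm h, fun h1 h2 => hR.trans h1 h2⟩⟩
  have key : ∀ (F : Proc → ℝ≥0∞), ∑' x : S, F x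
      = ∑' q : Quotient s, ∑' x : {x : S // Quotient.mk s x = q}, F x := by
    intro F
    rw [← (Equiv.sigmaFiberEquiv (Quotient.mk s)).tsum_eq (fun x : S => F x)]
    exact ENNReal.tsum_sigma' _
  rw [key f, key g]
  refine tsum_congr fun q => ?_
  have hmem : ∀ x : S, Quotient.mk s x = q ↔ R (q.out : S) x := by
    intro x
    constructor
    · intro hx
      have : Quotient.mk s q.out = Quotient.mk s x := by rw [hx, Quotient.out_eq]
      exact Quotient.exact this
    · intro hx
      rw [← Quotient.out_eq q]
      exact Quotient.sound (hR.symm hx)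
  have e : ∀ (F : Proc → ℝ≥0∞),
      ∑' x : {x : S // Quotient.mk s x = q}, F x
        = ∑' y : {y | R ((q.out : S) : Proc) y}, F y := by
    intro F
    let eqv : {x : S // Quotient.mk s x = q} ≃ {y | R ((q.out : S) : Proc) y} :=
      ⟨fun x => ⟨x.1.1, (hmem x.1).mp x.2⟩,
       fun y => ⟨⟨y.1, hsat _ (q.out : S).2 _ y.2⟩, (hmem _).mpr y.2⟩,
       fun x => by ext; rfl, fun y => by ext; rfl⟩
    exact eqv.tsum_eq (fun y : {y | R ((q.out : S) : Proc) y} => F y.1)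
  rw [e f, e g]
  exact h _ (q.out : S).2

/-- Lumpable bisimilarity on high contexts `≈_l^hc` is an
equivalence relation (reflexive, symmetric and transitive). -/
theorem lbhc_equivalence (E : ℕ → Proc) (Hs : Set Act) (hτ : Act.tau ∉ Hs) :
    Equivalence (lbhc E Hs) := by
  have main : IsLumpBisimHC E Hs (Relation.EqvGen (lbhc E Hs)) := by
    refine ⟨Relation.EqvGen.is_equivalence _, ?_⟩
    intro P Q hPQ Hc hHc α S hS hcond
    obtain ⟨Z, rfl⟩ := hS
    set S : Set Proc := {Y | Relation.EqvGen (lbhc E Hs) Z Y} with hSdef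
    revert hcond
    induction hPQ with
    | rel P Q h =>
      intro hcond
      obtain ⟨R1, hR1, hPQ1⟩ := h
      have hsub : ∀ x y, R1 x y → Relation.EqvGen (lbhc E Hs) x y :=
        fun x y hxy => Relation.EqvGen.rel _ _ ⟨R1, hR1, hxy⟩
      have hsat : ∀ x ∈ S, ∀ y, R1 x y → y ∈ S := by
        intro x hx y hxy
        exact Relation.EqvGen.trans _ _ _ hx (hsub _ _ hxy)
      show (∑' P' : S, qC E Hs Hc P α P') = ∑' P' : S, qC E Hs Hc Q α P'
      refine tsum_saturated hR1.1 hsat _ _ ?_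
      intro x hx
      have hT : {y | R1 x y} ∈ eqCls R1 := ⟨x, rfl⟩
      refine hR1.2 P Q hPQ1 Hc hHc α _ hT ?_
      rcases hcond with h' | ⟨hP, hQ⟩
      · exact Or.inl h'
      · exact Or.inr ⟨fun hPT => hP (hsat x hx P hPT),
          fun hQT => hQ (hsat x hx Q hQT)⟩
    | refl => intro _; rfl
    | symm P Q h ih =>
      intro hcond
      refine (ih ?_).symm
      rcases hcond with h' | ⟨hP, hQ⟩
      · exact Or.inl h'
      · exact Or.inr ⟨hQ, hP⟩
    | trans P Q Rr h1 h2 ih1 ih2 =>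
      intro hcond
      rcases hcond with h' | ⟨hP, hRr⟩
      · exact (ih1 (Or.inl h')).trans (ih2 (Or.inl h'))
      · have hQ : Q ∉ S := by
          intro hQ
          exact hP (Relation.EqvGen.trans _ _ _ hQ (Relation.EqvGen.symm _ _ h1))
        exact (ih1 (Or.inr ⟨hP, hQ⟩)).trans (ih2 (Or.inr ⟨hQ, hRr⟩))
  refine ⟨fun P => ⟨_, main, Relation.EqvGen.refl P⟩, ?_, ?_⟩
  · rintro P Q ⟨R, hR, h⟩
    exact ⟨R, hR, hR.1.symm h⟩
  · rintro P Q Rr h1 h2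
    exact ⟨_, main, Relation.EqvGen.trans _ _ _ (Relation.EqvGen.rel _ _ h1) (Relation.EqvGen.rel _ _ h2)⟩
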